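/- arXiv:1703.03660 — 5 statements merged into one kernel-verified Lean document; each statement's English description precedes it below -/
import Mathlib

section
/- Let T : ℓ²(I) → H be the synthesis operator of a J-frame F = {f_i}_{i∈I} for a Krein space H, and let P₊ be the orthogonal projection of ℓ²(I) onto ℓ²(I₊) where I₊ = {i : [f_i,f_i] ≥ 0}. Then the orthogonal projection P_{N(T)} onto the kernel of T commutes with P₊, i.e. P₊ P_{N(T)} = P_{N(T)} P₊. -/
noncomputable section

open scoped Classical

open Function

/-- The indefinite inner product `[x,y] = ⟨Jx, y⟩` induced by an operator `J`. -/
def kre {E : Type*} [NormedAddCommGroup E] [InnerProductSpace ℂ E]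
    (J : E →L[ℂ] E) (x y : E) : ℂ := @inner ℂ _ _ (J x) y

/-- `J` is a fundamental symmetry: a selfadjoint unitary (involutive) operator. -/
def IsFundSym {E : Type*} [NormedAddCommGroup E] [InnerProductSpace ℂ E] [CompleteSpace E]
    (J : E →L[ℂ] E) : Prop :=
  IsSelfAdjoint J ∧ J.comp J = ContinuousLinearMap.id ℂ E

/-- The J-orthogonal companion of a subspace. -/
def JorthCompanion {E : Type*} [NormedAddCommGroup E] [InnerProductSpace ℂ E]
    (J : E →L[ℂ] E) (S : Submodule ℂ E) : Submodule ℂ E where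
  carrier := {x | ∀ s ∈ S, kre J x s = 0}
  zero_mem' := by intro s hs; simp [kre]
  add_mem' := by
    intro a b ha hb s hs
    have h1 := ha s hs
    have h2 := hb s hs
    simp only [kre, map_add, inner_add_left] at h1 h2 ⊢
    rw [h1, h2, add_zero]
  smul_mem' := by
    intro c x hx s hs
    have h1 := hx s hs
    simp only [kre, map_smul, inner_smul_left] at h1 ⊢
    rw [h1, mul_zero]

/-- Uniformly J-positive subspace. -/
def UnifJPos {E : Type*} [NormedAddCommGroup E] [InnerProductSpace ℂ E]
    (J : E →L[ℂ] E) (S : Submodule ℂ E) : Prop :=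
  ∃ α : ℝ, 0 < α ∧ ∀ x ∈ S, α * ‖x‖ ^ 2 ≤ (kre J x x).re

/-- Uniformly J-negative subspace. -/
def UnifJNeg {E : Type*} [NormedAddCommGroup E] [InnerProductSpace ℂ E]
    (J : E →L[ℂ] E) (S : Submodule ℂ E) : Prop :=
  ∃ α : ℝ, 0 < α ∧ ∀ x ∈ S, (kre J x x).re ≤ -(α * ‖x‖ ^ 2)

/-- Maximal uniformly J-positive subspace. -/
def MaxUnifJPos {E : Type*} [NormedAddCommGroup E] [InnerProductSpace ℂ E]
    (J : E →L[ℂ] E) (S : Submodule ℂ E) : Prop :=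
  UnifJPos J S ∧ ∀ S' : Submodule ℂ E, UnifJPos J S' → S ≤ S' → S' = S

/-- Maximal uniformly J-negative subspace. -/
def MaxUnifJNeg {E : Type*} [NormedAddCommGroup E] [InnerProductSpace ℂ E]
    (J : E →L[ℂ] E) (S : Submodule ℂ E) : Prop :=
  UnifJNeg J S ∧ ∀ S' : Submodule ℂ E, UnifJNeg J S' → S ≤ S' → S' = S

/-- J-selfadjoint operator (with respect to the indefinite inner product of `J`). -/
def IsJSelfAdj {E : Type*} [NormedAddCommGroup E] [InnerProductSpace ℂ E]
    (J : E →L[ℂ] E) (A : E →L[ℂ] E) : Prop :=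
  ∀ x y : E, kre J (A x) y = kre J x (A y)

/-- The J-order: `A ≤_J B` iff `B - A` is J-positive. -/
def JLe {E : Type*} [NormedAddCommGroup E] [InnerProductSpace ℂ E]
    (J : E →L[ℂ] E) (A B : E →L[ℂ] E) : Prop :=
  ∀ x : E, 0 ≤ (kre J (B x - A x) x).re ∧ (kre J (B x - A x) x).im = 0

/-- The subspace of `ℓ²(I)` supported on a subset (given by a predicate) of `I`. -/
def suppSub {I : Type*} (A : I → Prop) : Submodule ℂ (lp (fun _ : I => ℂ) 2) where
  carrier := {x | ∀ i, ¬ A i → x i = 0}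
  zero_mem' := by intro i _; rfl
  add_mem' := by
    intro a b ha hb i hi
    have : (↑(a + b) : ∀ i, ℂ) i = a i + b i := by
      rw [lp.coeFn_add]; rfl
    simp [this, ha i hi, hb i hi]
  smul_mem' := by
    intro c x hx i hi
    have : (↑(c • x) : ∀ i, ℂ) i = c • x i := by
      rw [lp.coeFn_smul]; rfl
    simp [this, hx i hi]

variable {H : Type*} [NormedAddCommGroup H] [InnerProductSpace ℂ H] [CompleteSpace H]
variable {I : Type*} [DecidableEq I]

/-- `i` is a "positive index" for the family `f` w.r.t. `J`: `[f i, f i] ≥ 0`. -/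
def posIdx {H : Type*} [NormedAddCommGroup H] [InnerProductSpace ℂ H]
    (J : H →L[ℂ] H) (f : I → H) (i : I) : Prop := 0 ≤ (kre J (f i) (f i)).re

/-- The sign `σ_i = sgn [f i, f i]` (as a complex scalar, `+1` on `I₊` and `-1` on `I₋`). -/
def sgnv {H : Type*} [NormedAddCommGroup H] [InnerProductSpace ℂ H]
    (J : H →L[ℂ] H) (f : I → H) (i : I) : ℂ := if posIdx J f i then 1 else -1

/-- Closure of the span of the vectors of the family `h` with positive indices (signs taken
from the family `f`). -/
def posSpan {H : Type*} [NormedAddCommGroup H] [InnerProductSpace ℂ H]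
    (J : H →L[ℂ] H) (f h : I → H) : Submodule ℂ H :=
  (Submodule.span ℂ {x | ∃ i, posIdx J f i ∧ h i = x}).topologicalClosure

/-- Closure of the span of the vectors of the family `h` with negative indices. -/
def negSpan {H : Type*} [NormedAddCommGroup H] [InnerProductSpace ℂ H]
    (J : H →L[ℂ] H) (f h : I → H) : Submodule ℂ H :=
  (Submodule.span ℂ {x | ∃ i, ¬ posIdx J f i ∧ h i = x}).topologicalClosure

/-- A Bessel family in a Hilbert space. -/
def IsBessel {H : Type*} [NormedAddCommGroup H] [InnerProductSpace ℂ H]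
    (g : I → H) : Prop :=
  ∃ β : ℝ, ∀ (x : H) (s : Finset I),
    ∑ i ∈ s, ‖@inner ℂ _ _ (g i) x‖ ^ 2 ≤ β * ‖x‖ ^ 2

/-- `g` is a dual family for `f`: the signs coincide and the two indefinite
reconstruction formulas hold. -/
def IsDualFamily {H : Type*} [NormedAddCommGroup H] [InnerProductSpace ℂ H]
    (J : H →L[ℂ] H) (f g : I → H) : Prop :=
  (∀ i, Real.sign ((kre J (g i) (g i)).re) = Real.sign ((kre J (f i) (f i)).re)) ∧
  (∀ x : H, HasSum (fun i => (sgnv J f i * kre J x (f i)) • g i) x) ∧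
  (∀ x : H, HasSum (fun i => (sgnv J f i * kre J x (g i)) • f i) x)

/-!
Since `P₊ + P₋ = 1` and the ranges of `T P₊` and `T P₋` meet only in `0` (a vector cannot be
both uniformly `J`-positive and uniformly `J`-negative), `T x = 0` gives `T P₊ x = -T P₋ x = 0`:
the selfadjoint projection `P₊` leaves `N(T)` invariant, hence also `N(T)ᗮ`, and therefore
commutes with the orthogonal projection onto `N(T)`.
-/

theorem UnifJPos.disjoint_of_unifJNeg {E : Type*} [NormedAddCommGroup E] [InnerProductSpace ℂ E]
    {J : E →L[ℂ] E} {S S' : Submodule ℂ E} (hS : UnifJPos J S) (hS' : UnifJNeg J S') :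
    Disjoint S S' := by
  obtain ⟨α, hα, hpos⟩ := hS
  obtain ⟨β, hβ, hneg⟩ := hS'
  refine Submodule.disjoint_def.mpr fun x hx hx' => ?_
  have hle : (α + β) * ‖x‖ ^ 2 ≤ 0 := by linarith [hpos x hx, hneg x hx']
  have hsq : ‖x‖ ^ 2 = 0 :=
    le_antisymm (nonpos_of_mul_nonpos_right hle (by linarith)) (sq_nonneg _)
  simpa using hsq

theorem LinearMap.ker_mem_invtSubmodule_of_disjoint_range_comp {R M N : Type*} [Ring R]
    [AddCommGroup M] [Module R M] [AddCommGroup N] [Module R N] {T : M →ₗ[R] N}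
    {P Q : M →ₗ[R] M} (hPQ : ∀ x, P x + Q x = x)
    (hdisj : Disjoint (range (T ∘ₗ P)) (range (T ∘ₗ Q))) :
    ker T ∈ Module.End.invtSubmodule P := by
  intro x hx
  have hTPQ : T (P x) = T (Q (-x)) := by
    rw [map_neg, map_neg, eq_neg_iff_add_eq_zero, ← map_add, hPQ, mem_ker.mp hx]
  exact Submodule.disjoint_def.mp hdisj _ ⟨x, rfl⟩ ⟨-x, hTPQ.symm⟩

section OrthogonalDecomposition

variable {𝕜 E : Type*} [RCLike 𝕜] [NormedAddCommGroup E] [InnerProductSpace 𝕜 E]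
  {K : Submodule 𝕜 E} {Q : E → E}

theorem eq_of_mem_of_sub_mem_orthogonal (hQ : ∀ x, Q x ∈ K ∧ x - Q x ∈ Kᗮ) {x a : E}
    (ha : a ∈ K) (hxa : x - a ∈ Kᗮ) : a = Q x := by
  have hK : a - Q x ∈ K := K.sub_mem ha (hQ x).1
  have hKperp : a - Q x ∈ Kᗮ := by
    simpa using Kᗮ.sub_mem (hQ x).2 hxa
  exact sub_eq_zero.mp (Submodule.disjoint_def.mp K.orthogonal_disjoint _ hK hKperp)

theorem LinearMap.IsSymmetric.commute_of_mem_invtSubmodule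
    (hQ : ∀ x, Q x ∈ K ∧ x - Q x ∈ Kᗮ) {P : E →ₗ[𝕜] E} (hP : P.IsSymmetric)
    (hK : K ∈ Module.End.invtSubmodule P) (x : E) : P (Q x) = Q (P x) := by
  refine eq_of_mem_of_sub_mem_orthogonal hQ (hK (hQ x).1) ?_
  rw [← map_sub]
  exact hP.orthogonalComplement_mem_invtSubmodule hK (hQ x).2

end OrthogonalDecomposition

section CoordinateRestriction

variable {𝕜 ι : Type*} [RCLike 𝕜] {G : ι → Type*} [∀ i, NormedAddCommGroup (G i)]
  [∀ i, InnerProductSpace 𝕜 (G i)] {p : ι → Prop} [DecidablePred p]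

theorem lp.restrict_add_restrict_compl {P Q : lp G 2 → lp G 2}
    (hP : ∀ x i, P x i = if p i then x i else 0) (hQ : ∀ x i, Q x i = if p i then 0 else x i)
    (x : lp G 2) : P x + Q x = x := by
  ext i
  rw [lp.coeFn_add, Pi.add_apply, hP, hQ]
  split_ifs <;> simp

theorem lp.isSymmetric_restrict {P : lp G 2 →ₗ[𝕜] lp G 2}
    (hP : ∀ x i, P x i = if p i then x i else 0) : P.IsSymmetric := by
  intro x y
  rw [lp.inner_eq_tsum, lp.inner_eq_tsum]
  refine tsum_congr fun i => ?_
  rw [hP, hP]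
  split_ifs <;> simp

end CoordinateRestriction

theorem jframe_kernelProj_comm_general
    (J : H →L[ℂ] H) (f : I → H)
    (T : lp (fun _ : I => ℂ) 2 →L[ℂ] H)
    (Pp Pm : lp (fun _ : I => ℂ) 2 →L[ℂ] lp (fun _ : I => ℂ) 2)
    (hPp : ∀ (x : lp (fun _ : I => ℂ) 2) (i : I), Pp x i = if posIdx J f i then x i else 0)
    (hPm : ∀ (x : lp (fun _ : I => ℂ) 2) (i : I), Pm x i = if posIdx J f i then 0 else x i)
    (hJF : MaxUnifJPos J (LinearMap.range ((T.comp Pp : lp (fun _ : I => ℂ) 2 →L[ℂ] H) : lp (fun _ : I => ℂ) 2 →ₗ[ℂ] H)) ∧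
      MaxUnifJNeg J (LinearMap.range ((T.comp Pm : lp (fun _ : I => ℂ) 2 →L[ℂ] H) : lp (fun _ : I => ℂ) 2 →ₗ[ℂ] H)))
    (PN : lp (fun _ : I => ℂ) 2 →L[ℂ] lp (fun _ : I => ℂ) 2)
    (hPN : ∀ x : lp (fun _ : I => ℂ) 2, PN x ∈ LinearMap.ker (T : lp (fun _ : I => ℂ) 2 →ₗ[ℂ] H) ∧
      x - PN x ∈ (LinearMap.ker (T : lp (fun _ : I => ℂ) 2 →ₗ[ℂ] H) : Submodule ℂ (lp (fun _ : I => ℂ) 2))ᗮ) :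
    Pp.comp PN = PN.comp Pp := by
  have hker : LinearMap.ker (T : lp (fun _ : I => ℂ) 2 →ₗ[ℂ] H) ∈
      Module.End.invtSubmodule (Pp : lp (fun _ : I => ℂ) 2 →ₗ[ℂ] lp (fun _ : I => ℂ) 2) :=
    LinearMap.ker_mem_invtSubmodule_of_disjoint_range_comp (lp.restrict_add_restrict_compl hPp hPm)
      (hJF.1.1.disjoint_of_unifJNeg hJF.2.1)
  ext1 x
  exact (lp.isSymmetric_restrict hPp).commute_of_mem_invtSubmodule hPN hker x

/-- For a J-frame, the orthogonal projection onto `N(T)` commutes with `P₊`. -/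
theorem jframe_kernelProj_comm
    (J : H →L[ℂ] H) (hJ : IsFundSym J) (f : I → H)
    (T : lp (fun _ : I => ℂ) 2 →L[ℂ] H)
    (hT : ∀ i, T (lp.single 2 i (1:ℂ)) = f i)
    (hTsurj : Function.Surjective T)
    (Pp Pm : lp (fun _ : I => ℂ) 2 →L[ℂ] lp (fun _ : I => ℂ) 2)
    (hPp : ∀ (x : lp (fun _ : I => ℂ) 2) (i : I), Pp x i = if posIdx J f i then x i else 0)
    (hPm : ∀ (x : lp (fun _ : I => ℂ) 2) (i : I), Pm x i = if posIdx J f i then 0 else x i)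
    (hJF : MaxUnifJPos J (LinearMap.range ((T.comp Pp : lp (fun _ : I => ℂ) 2 →L[ℂ] H) : lp (fun _ : I => ℂ) 2 →ₗ[ℂ] H)) ∧
      MaxUnifJNeg J (LinearMap.range ((T.comp Pm : lp (fun _ : I => ℂ) 2 →L[ℂ] H) : lp (fun _ : I => ℂ) 2 →ₗ[ℂ] H)))
    (PN : lp (fun _ : I => ℂ) 2 →L[ℂ] lp (fun _ : I => ℂ) 2)
    (hPN : ∀ x : lp (fun _ : I => ℂ) 2, PN x ∈ LinearMap.ker (T : lp (fun _ : I => ℂ) 2 →ₗ[ℂ] H) ∧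
      x - PN x ∈ (LinearMap.ker (T : lp (fun _ : I => ℂ) 2 →ₗ[ℂ] H) : Submodule ℂ (lp (fun _ : I => ℂ) 2))ᗮ) :
    Pp.comp PN = PN.comp Pp :=
  jframe_kernelProj_comm_general J f T Pp Pm hPp hPm hJF PN hPN
end
end

section
/- Let F be a J-frame for a Krein space H with synthesis operator T. Then the kernel N(T) decomposes as the J-orthogonal direct sum N(T) = (N(T) ∩ ℓ²(I₊)) [∔] (N(T) ∩ ℓ²(I₋)); in particular N(T) is a regular subspace of the Krein space ℓ²(I) equipped with the indefinite product [x,y]₂ = Σ_{i∈I₊} x_i ȳ_i − Σ_{i∈I₋} x_i ȳ_i. -/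
noncomputable section

open scoped Classical

open Function

variable {H : Type*} [NormedAddCommGroup H] [InnerProductSpace ℂ H] [CompleteSpace H]
variable {I : Type*} [DecidableEq I]

theorem LinearMap.map_eq_zero_of_disjoint_range {R M N : Type*} [Ring R] [AddCommGroup M]
    [Module R M] [AddCommGroup N] [Module R N] {T : M →ₗ[R] N} {P Q : M →ₗ[R] M}
    (hPQ : ∀ x, P x + Q x = x) (h : Disjoint (range (T ∘ₗ P)) (range (T ∘ₗ Q)))
    {x : M} (hx : T x = 0) : T (P x) = 0 ∧ T (Q x) = 0 := by
  have hneg : T (P x) = -T (Q x) := eq_neg_of_add_eq_zero_left (by rw [← map_add, hPQ, hx])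
  have hP : T (P x) = 0 :=
    Submodule.disjoint_def.mp h _ ⟨x, rfl⟩ (hneg ▸ neg_mem ⟨x, rfl⟩)
  exact ⟨hP, neg_eq_zero.mp (hneg ▸ hP)⟩

section FundamentalSymmetry

variable {E : Type*} [NormedAddCommGroup E] [InnerProductSpace ℂ E] [CompleteSpace E]
  {J : E →L[ℂ] E} {K : Submodule ℂ E}

theorem IsFundSym.inner_map_left (hJ : IsFundSym J) (x y : E) :
    @inner ℂ _ _ (J x) y = @inner ℂ _ _ x (J y) :=
  hJ.1.isSymmetric x y

theorem IsFundSym.inner_map_map (hJ : IsFundSym J) (x y : E) :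
    @inner ℂ _ _ (J x) (J y) = @inner ℂ _ _ x y := by
  rw [hJ.inner_map_left]
  exact congrArg _ (ContinuousLinearMap.ext_iff.mp hJ.2 y)

theorem IsFundSym.jorthCompanion_eq_orthogonal (hJ : IsFundSym J) (hK : ∀ x ∈ K, J x ∈ K) :
    JorthCompanion J K = Kᗮ := by
  ext x
  refine ⟨fun hx => (Submodule.mem_orthogonal' K x).mpr fun s hs => ?_, fun hx s hs => ?_⟩
  · rw [← hJ.inner_map_map]
    exact hx (J s) (hK s hs)
  · show @inner ℂ _ _ (J x) s = 0
    rw [hJ.inner_map_left]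
    exact (Submodule.mem_orthogonal' K x).mp hx (J s) (hK s hs)

theorem IsFundSym.isCompl_jorthCompanion [K.HasOrthogonalProjection] (hJ : IsFundSym J)
    (hK : ∀ x ∈ K, J x ∈ K) : IsCompl K (JorthCompanion J K) :=
  hJ.jorthCompanion_eq_orthogonal hK ▸ K.isCompl_orthogonal

end FundamentalSymmetry

section CoordinateProjections

local notation "ℓ²(" ι ")" => lp (fun _ : ι => ℂ) 2

variable {ι : Type*} {A : ι → Prop} {P Q : ℓ²(ι) →L[ℂ] ℓ²(ι)}

theorem add_apply_eq_self_of_coord (hP : ∀ (x : ℓ²(ι)) (i : ι), P x i = if A i then x i else 0)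
    (hQ : ∀ (x : ℓ²(ι)) (i : ι), Q x i = if A i then 0 else x i) (x : ℓ²(ι)) : P x + Q x = x := by
  ext i
  rw [lp.coeFn_add, Pi.add_apply, hP, hQ]
  split_ifs <;> simp

theorem sub_apply_coord (hP : ∀ (x : ℓ²(ι)) (i : ι), P x i = if A i then x i else 0)
    (hQ : ∀ (x : ℓ²(ι)) (i : ι), Q x i = if A i then 0 else x i) (x : ℓ²(ι)) (i : ι) :
    (P - Q) x i = if A i then x i else -x i := by
  rw [sub_apply, lp.coeFn_sub, Pi.sub_apply, hP, hQ]
  split_ifs <;> simp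

theorem isFundSym_sub (hP : ∀ (x : ℓ²(ι)) (i : ι), P x i = if A i then x i else 0)
    (hQ : ∀ (x : ℓ²(ι)) (i : ι), Q x i = if A i then 0 else x i) : IsFundSym (P - Q) := by
  refine ⟨LinearMap.IsSymmetric.isSelfAdjoint fun x y => ?_, ?_⟩
  · simp only [ContinuousLinearMap.coe_coe, lp.inner_eq_tsum]
    refine tsum_congr fun i => ?_
    rw [sub_apply_coord hP hQ, sub_apply_coord hP hQ]
    split_ifs <;> simp
  · ext x i
    simp only [ContinuousLinearMap.comp_apply, ContinuousLinearMap.id_apply,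
      sub_apply_coord hP hQ]
    split_ifs <;> simp

theorem inner_eq_zero_of_mem_suppSub {x y : ℓ²(ι)} (hx : x ∈ suppSub A)
    (hy : y ∈ suppSub fun i => ¬ A i) : @inner ℂ _ _ x y = 0 := by
  rw [lp.inner_eq_tsum]
  refine (tsum_congr fun i => ?_).trans tsum_zero
  by_cases h : A i
  · rw [hy i (not_not_intro h), inner_zero_right]
  · rw [hx i h, inner_zero_left]

theorem apply_mem_suppSub_of_coord (hP : ∀ (x : ℓ²(ι)) (i : ι), P x i = if A i then x i else 0)
    (x : ℓ²(ι)) : P x ∈ suppSub A := fun i hi => by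
  rw [hP, if_neg hi]

theorem apply_mem_suppSub_not_of_coord
    (hQ : ∀ (x : ℓ²(ι)) (i : ι), Q x i = if A i then 0 else x i) (x : ℓ²(ι)) :
    Q x ∈ suppSub fun i => ¬ A i := fun i hi => by
  rw [hQ, if_pos (not_not.mp hi)]

theorem sub_apply_mem_suppSub (hP : ∀ (x : ℓ²(ι)) (i : ι), P x i = if A i then x i else 0)
    (hQ : ∀ (x : ℓ²(ι)) (i : ι), Q x i = if A i then 0 else x i) {x : ℓ²(ι)}
    (hx : x ∈ suppSub A) : (P - Q) x ∈ suppSub A := fun i hi => by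
  rw [sub_apply_coord hP hQ, if_neg hi, hx i hi, neg_zero]

end CoordinateProjections

theorem jframe_kernel_decomposition_general
    (J : H →L[ℂ] H) (f : I → H)
    (T : lp (fun _ : I => ℂ) 2 →L[ℂ] H)
    (Pp Pm : lp (fun _ : I => ℂ) 2 →L[ℂ] lp (fun _ : I => ℂ) 2)
    (hPp : ∀ (x : lp (fun _ : I => ℂ) 2) (i : I), Pp x i = if posIdx J f i then x i else 0)
    (hPm : ∀ (x : lp (fun _ : I => ℂ) 2) (i : I), Pm x i = if posIdx J f i then 0 else x i)
    (hJF : MaxUnifJPos J (LinearMap.range (T.comp Pp : lp (fun _ : I => ℂ) 2 →ₗ[ℂ] H)) ∧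
      MaxUnifJNeg J (LinearMap.range (T.comp Pm : lp (fun _ : I => ℂ) 2 →ₗ[ℂ] H))) :
    LinearMap.ker (T : lp (fun _ : I => ℂ) 2 →ₗ[ℂ] H) =
        (LinearMap.ker (T : lp (fun _ : I => ℂ) 2 →ₗ[ℂ] H) ⊓ suppSub (posIdx J f)) ⊔
          (LinearMap.ker (T : lp (fun _ : I => ℂ) 2 →ₗ[ℂ] H) ⊓ suppSub (fun i => ¬ posIdx J f i)) ∧
      (∀ x ∈ LinearMap.ker (T : lp (fun _ : I => ℂ) 2 →ₗ[ℂ] H) ⊓ suppSub (posIdx J f),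
        ∀ y ∈ LinearMap.ker (T : lp (fun _ : I => ℂ) 2 →ₗ[ℂ] H) ⊓ suppSub (fun i => ¬ posIdx J f i),
          kre (Pp - Pm) x y = 0) ∧
      IsCompl (LinearMap.ker (T : lp (fun _ : I => ℂ) 2 →ₗ[ℂ] H) : Submodule ℂ (lp (fun _ : I => ℂ) 2))
        (JorthCompanion (Pp - Pm) (LinearMap.ker (T : lp (fun _ : I => ℂ) 2 →ₗ[ℂ] H))) := by
  have hsum := add_apply_eq_self_of_coord hPp hPm
  have hker : ∀ x ∈ LinearMap.ker (T : lp (fun _ : I => ℂ) 2 →ₗ[ℂ] H),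
      T (Pp x) = 0 ∧ T (Pm x) = 0 := fun x hx =>
    LinearMap.map_eq_zero_of_disjoint_range (P := Pp) (Q := Pm) hsum
      (hJF.1.1.disjoint_of_unifJNeg hJF.2.1) hx
  refine ⟨le_antisymm (fun x hx => ?_) (sup_le inf_le_left inf_le_left),
    fun x hx y hy => inner_eq_zero_of_mem_suppSub (sub_apply_mem_suppSub hPp hPm hx.2) hy.2,
    (isFundSym_sub hPp hPm).isCompl_jorthCompanion fun x hx => ?_⟩
  · rw [← hsum x]
    exact Submodule.add_mem_sup ⟨(hker x hx).1, apply_mem_suppSub_of_coord hPp x⟩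
      ⟨(hker x hx).2, apply_mem_suppSub_not_of_coord hPm x⟩
  · rw [LinearMap.mem_ker, ContinuousLinearMap.coe_coe, sub_apply, map_sub, (hker x hx).1,
      (hker x hx).2, sub_zero]

/-- For a J-frame, `N(T)` decomposes as the J-orthogonal direct sum of
`N(T) ∩ ℓ²(I₊)` and `N(T) ∩ ℓ²(I₋)`; in particular `N(T)` is a regular subspace of the
Krein space `ℓ²(I)` (with fundamental symmetry `J₂ = P₊ - P₋`). -/
theorem jframe_kernel_decomposition
    (J : H →L[ℂ] H) (hJ : IsFundSym J) (f : I → H)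
    (T : lp (fun _ : I => ℂ) 2 →L[ℂ] H)
    (hT : ∀ i, T (lp.single 2 i (1:ℂ)) = f i)
    (hTsurj : Function.Surjective T)
    (Pp Pm : lp (fun _ : I => ℂ) 2 →L[ℂ] lp (fun _ : I => ℂ) 2)
    (hPp : ∀ (x : lp (fun _ : I => ℂ) 2) (i : I), Pp x i = if posIdx J f i then x i else 0)
    (hPm : ∀ (x : lp (fun _ : I => ℂ) 2) (i : I), Pm x i = if posIdx J f i then 0 else x i)
    (hJF : MaxUnifJPos J (LinearMap.range (T.comp Pp : lp (fun _ : I => ℂ) 2 →ₗ[ℂ] H)) ∧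
      MaxUnifJNeg J (LinearMap.range (T.comp Pm : lp (fun _ : I => ℂ) 2 →ₗ[ℂ] H))) :
    LinearMap.ker (T : lp (fun _ : I => ℂ) 2 →ₗ[ℂ] H) =
        (LinearMap.ker (T : lp (fun _ : I => ℂ) 2 →ₗ[ℂ] H) ⊓ suppSub (posIdx J f)) ⊔
          (LinearMap.ker (T : lp (fun _ : I => ℂ) 2 →ₗ[ℂ] H) ⊓ suppSub (fun i => ¬ posIdx J f i)) ∧
      (∀ x ∈ LinearMap.ker (T : lp (fun _ : I => ℂ) 2 →ₗ[ℂ] H) ⊓ suppSub (posIdx J f),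
        ∀ y ∈ LinearMap.ker (T : lp (fun _ : I => ℂ) 2 →ₗ[ℂ] H) ⊓ suppSub (fun i => ¬ posIdx J f i),
          kre (Pp - Pm) x y = 0) ∧
      IsCompl (LinearMap.ker (T : lp (fun _ : I => ℂ) 2 →ₗ[ℂ] H) : Submodule ℂ (lp (fun _ : I => ℂ) 2))
        (JorthCompanion (Pp - Pm) (LinearMap.ker (T : lp (fun _ : I => ℂ) 2 →ₗ[ℂ] H))) :=
  jframe_kernel_decomposition_general J f T Pp Pm hPp hPm hJF
end
end

section
/- Let F be a J-frame for a Krein space H with synthesis operator T and J-frame operator S = TT⁺ (where T⁺ is the Krein-space adjoint). Then E := T⁺ S⁻¹ T is the unique J-selfadjoint projection of ℓ²(I) onto N(T)^{[⊥]} = R(T⁺). -/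
noncomputable section

open scoped Classical

open Function

variable {H : Type*} [NormedAddCommGroup H] [InnerProductSpace ℂ H] [CompleteSpace H]
variable {I : Type*} [DecidableEq I]

/-!
`E = T⁺ S⁻¹ T` is idempotent because `T T⁺ = S`, and it is J-selfadjoint because `S`, hence
`S⁻¹`, is. The kernel of `E` is `N(T)` since `S⁻¹` and `T⁺` are injective. For any
J-selfadjoint idempotent `E` on a space with nondegenerate indefinite inner product one has
`R(E) = N(E)^[⊥]`, and two such idempotents with the same range coincide, because
`[E' x, z] = [x, E E' z] = [E' E x, z]` for all `z`.
-/

open ContinuousLinearMap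

section Kre

variable {V : Type*} [NormedAddCommGroup V] [InnerProductSpace ℂ V] {J : V →L[ℂ] V}

theorem kre_sub_left (x y z : V) : kre J (x - y) z = kre J x z - kre J y z := by
  simp only [kre, map_sub, inner_sub_left]

theorem kre_sub_right (x y z : V) : kre J x (y - z) = kre J x y - kre J x z := by
  simp only [kre, inner_sub_right]

theorem kre_zero_right (x : V) : kre J x 0 = 0 := by
  simp only [kre, inner_zero_right]

theorem kre_conj_symm (hJ : (J : V →ₗ[ℂ] V).IsSymmetric) (x y : V) :
    starRingEnd ℂ (kre J y x) = kre J x y := by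
  have h := hJ y x
  rw [coe_coe] at h
  rw [kre, h, inner_conj_symm, kre]

theorem eq_zero_of_forall_kre_eq_zero (hJ : Function.Injective J) {u : V}
    (hu : ∀ z, kre J u z = 0) : u = 0 :=
  hJ (by rw [map_zero]; exact inner_self_eq_zero.mp (hu (J u)))

theorem ext_kre (hJ : Function.Injective J) {u v : V}
    (h : ∀ z, kre J u z = kre J v z) : u = v :=
  sub_eq_zero.mp <| eq_zero_of_forall_kre_eq_zero hJ fun z => by rw [kre_sub_left, h, sub_self]

theorem IsJSelfAdj.of_comp_eq_id {A B : V →L[ℂ] V} (hA : IsJSelfAdj J A)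
    (hAB : A.comp B = ContinuousLinearMap.id ℂ V) : IsJSelfAdj J B := by
  have hAB' : ∀ v, A (B v) = v := fun v => congr($hAB v)
  intro u v
  conv_lhs => rw [← hAB' v]
  rw [← hA, hAB']

end Kre

section Idempotent

variable {V : Type*} [NormedAddCommGroup V] [InnerProductSpace ℂ V] {J : V →L[ℂ] V}
  {E : V →L[ℂ] V}

theorem IsJSelfAdj.range_eq_jorthCompanion_ker (hJ : Function.Injective J)
    (hE : IsIdempotentElem E) (hEJ : IsJSelfAdj J E) :
    LinearMap.range (E : V →ₗ[ℂ] V) = JorthCompanion J (LinearMap.ker (E : V →ₗ[ℂ] V)) := by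
  apply le_antisymm
  · rintro _ ⟨w, rfl⟩ s hs
    rw [coe_coe, hEJ, show E s = 0 from hs, kre_zero_right]
  · intro x hx
    have hker : ∀ z, z - E z ∈ LinearMap.ker (E : V →ₗ[ℂ] V) := fun z => by
      simp only [LinearMap.mem_ker, coe_coe, map_sub, sub_eq_zero]
      exact (DFunLike.congr_fun hE z).symm
    refine ⟨x, ext_kre hJ fun z => ?_⟩
    rw [coe_coe, hEJ, eq_comm, ← sub_eq_zero, ← kre_sub_right]
    exact hx _ (hker z)

theorem IsJSelfAdj.eq_of_range_eq (hJ : Function.Injective J) {E' : V →L[ℂ] V}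
    (hE : IsIdempotentElem E) (hEJ : IsJSelfAdj J E)
    (hE' : IsIdempotentElem E') (hE'J : IsJSelfAdj J E')
    (hrange : LinearMap.range (E' : V →ₗ[ℂ] V) = LinearMap.range (E : V →ₗ[ℂ] V)) :
    E' = E := by
  have hEE' : ∀ z, E (E' z) = E' z := fun z => by
    obtain ⟨w, hw⟩ : E' z ∈ LinearMap.range (E : V →ₗ[ℂ] V) := hrange ▸ ⟨z, rfl⟩
    rw [← hw, coe_coe]
    exact congr($hE w)
  have hE'E : ∀ z, E' (E z) = E z := fun z => by
    obtain ⟨w, hw⟩ : E z ∈ LinearMap.range (E' : V →ₗ[ℂ] V) := hrange ▸ ⟨z, rfl⟩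
    rw [← hw, coe_coe]
    exact congr($hE' w)
  ext x
  refine ext_kre hJ fun z => ?_
  calc kre J (E' x) z = kre J x (E (E' z)) := by rw [hE'J, hEE']
    _ = kre J (E' (E x)) z := by rw [← hEJ, hE'J]
    _ = kre J (E x) z := by rw [hE'E]

end Idempotent

section KreinAdjoint

variable {V W : Type*} [NormedAddCommGroup V] [InnerProductSpace ℂ V]
  [NormedAddCommGroup W] [InnerProductSpace ℂ W] {J : W →L[ℂ] W} {J₂ : V →L[ℂ] V}
  {T : V →L[ℂ] W} {Tp : W →L[ℂ] V}

theorem isJSelfAdj_comp_of_kre_adjoint (hJ : (J : W →ₗ[ℂ] W).IsSymmetric)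
    (hJ₂ : (J₂ : V →ₗ[ℂ] V).IsSymmetric)
    (hTp : ∀ x y, kre J (T x) y = kre J₂ x (Tp y)) : IsJSelfAdj J (T.comp Tp) := by
  intro u v
  rw [ContinuousLinearMap.comp_apply, ContinuousLinearMap.comp_apply, hTp, ← kre_conj_symm hJ, hTp,
    kre_conj_symm hJ₂]

theorem isJSelfAdj_conj_of_kre_adjoint (hJ : (J : W →ₗ[ℂ] W).IsSymmetric)
    (hJ₂ : (J₂ : V →ₗ[ℂ] V).IsSymmetric)
    (hTp : ∀ x y, kre J (T x) y = kre J₂ x (Tp y)) {B : W →L[ℂ] W} (hB : IsJSelfAdj J B) :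
    IsJSelfAdj J₂ (Tp.comp (B.comp T)) := by
  intro x y
  simp only [ContinuousLinearMap.comp_apply]
  rw [← kre_conj_symm hJ₂, ← hTp, kre_conj_symm hJ, hB, hTp]

end KreinAdjoint

section SignOperator

variable {ι : Type*} {p : ι → Prop} [DecidablePred p]
  {J₂ : lp (fun _ : ι => ℂ) 2 →L[ℂ] lp (fun _ : ι => ℂ) 2}

theorem isSymmetric_of_apply_eq_ite (h : ∀ x i, J₂ x i = if p i then x i else -x i) :
    (J₂ : lp (fun _ : ι => ℂ) 2 →ₗ[ℂ] lp (fun _ : ι => ℂ) 2).IsSymmetric := by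
  intro a b
  rw [coe_coe, lp.inner_eq_tsum, lp.inner_eq_tsum]
  refine tsum_congr fun i => ?_
  rw [h, h]
  split_ifs <;> simp only [inner_neg_left, inner_neg_right]

theorem injective_of_apply_eq_ite (h : ∀ x i, J₂ x i = if p i then x i else -x i) :
    Function.Injective J₂ := by
  refine (injective_iff_map_eq_zero J₂).mpr fun u hu => lp.ext <| funext fun i => ?_
  have hi := congr($hu i)
  rw [h] at hi
  split_ifs at hi <;> simpa using hi

end SignOperator

theorem jframe_jselfadjoint_projection_general
    (J : H →L[ℂ] H) (hJ : IsFundSym J) (f : I → H)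
    (T : lp (fun _ : I => ℂ) 2 →L[ℂ] H)
    (Pp Pm : lp (fun _ : I => ℂ) 2 →L[ℂ] lp (fun _ : I => ℂ) 2)
    (hPp : ∀ (x : lp (fun _ : I => ℂ) 2) (i : I), Pp x i = if posIdx J f i then x i else 0)
    (hPm : ∀ (x : lp (fun _ : I => ℂ) 2) (i : I), Pm x i = if posIdx J f i then 0 else x i)
    (Tp : H →L[ℂ] lp (fun _ : I => ℂ) 2)
    (hTp : ∀ (x : lp (fun _ : I => ℂ) 2) (y : H), kre J (T x) y = kre (Pp - Pm) x (Tp y))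
    (Sinv : H →L[ℂ] H)
    (hS1 : (T.comp Tp).comp Sinv = ContinuousLinearMap.id ℂ H)
    (hS2 : Sinv.comp (T.comp Tp) = ContinuousLinearMap.id ℂ H) :
    (Tp.comp (Sinv.comp T)).comp (Tp.comp (Sinv.comp T)) = Tp.comp (Sinv.comp T) ∧
      IsJSelfAdj (Pp - Pm) (Tp.comp (Sinv.comp T)) ∧
      LinearMap.range ((Tp.comp (Sinv.comp T) : lp (fun _ : I => ℂ) 2 →L[ℂ] lp (fun _ : I => ℂ) 2) : lp (fun _ : I => ℂ) 2 →ₗ[ℂ] lp (fun _ : I => ℂ) 2) =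
        JorthCompanion (Pp - Pm) (LinearMap.ker (T : lp (fun _ : I => ℂ) 2 →ₗ[ℂ] H)) ∧
      LinearMap.range ((Tp.comp (Sinv.comp T) : lp (fun _ : I => ℂ) 2 →L[ℂ] lp (fun _ : I => ℂ) 2) : lp (fun _ : I => ℂ) 2 →ₗ[ℂ] lp (fun _ : I => ℂ) 2) = LinearMap.range (Tp : H →ₗ[ℂ] lp (fun _ : I => ℂ) 2) ∧
      ∀ E' : lp (fun _ : I => ℂ) 2 →L[ℂ] lp (fun _ : I => ℂ) 2, E'.comp E' = E' → IsJSelfAdj (Pp - Pm) E' →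
        LinearMap.range (E' : lp (fun _ : I => ℂ) 2 →ₗ[ℂ] lp (fun _ : I => ℂ) 2) = JorthCompanion (Pp - Pm) (LinearMap.ker (T : lp (fun _ : I => ℂ) 2 →ₗ[ℂ] H)) →
          E' = Tp.comp (Sinv.comp T) := by
  set E := Tp.comp (Sinv.comp T)
  have hJ₂apply : ∀ x i, (Pp - Pm) x i = if posIdx J f i then x i else -x i := fun x i => by
    rw [sub_apply, lp.coeFn_sub, Pi.sub_apply, hPp, hPm]
    split_ifs <;> simp
  have hJ₂sym := isSymmetric_of_apply_eq_ite hJ₂apply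
  have hJ₂inj := injective_of_apply_eq_ite hJ₂apply
  have hS1' : ∀ y, T (Tp (Sinv y)) = y := fun y => congr($hS1 y)
  have hS2' : ∀ y, Sinv (T (Tp y)) = y := fun y => congr($hS2 y)
  have hidem : IsIdempotentElem E := ext fun x => show E (E x) = E x by
    simp only [E, ContinuousLinearMap.comp_apply, hS2']
  have hSinv : IsJSelfAdj J Sinv :=
    (isJSelfAdj_comp_of_kre_adjoint hJ.1.isSymmetric hJ₂sym hTp).of_comp_eq_id hS1
  have hEJ : IsJSelfAdj (Pp - Pm) E :=
    isJSelfAdj_conj_of_kre_adjoint hJ.1.isSymmetric hJ₂sym hTp hSinv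
  have hker : LinearMap.ker (E : lp (fun _ : I => ℂ) 2 →ₗ[ℂ] lp (fun _ : I => ℂ) 2) =
       LinearMap.ker (T : lp (fun _ : I => ℂ) 2 →ₗ[ℂ] H) := by
    ext x
    simp only [E, LinearMap.mem_ker, coe_coe, ContinuousLinearMap.comp_apply]
    constructor
    · intro hx; rw [← hS1' (T x), hx, map_zero]
    · intro hx; rw [hx, map_zero, map_zero]
  have hcomp := hEJ.range_eq_jorthCompanion_ker hJ₂inj hidem
  rw [hker] at hcomp
  refine ⟨hidem, hEJ, hcomp, ?_, fun E' hE' hE'J hE'range =>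
    IsJSelfAdj.eq_of_range_eq hJ₂inj hidem hEJ hE' hE'J (hE'range.trans hcomp.symm)⟩
  apply le_antisymm
  · rintro _ ⟨x, rfl⟩
    exact ⟨Sinv (T x), rfl⟩
  · rintro _ ⟨y, rfl⟩
    exact ⟨Tp y, by simp only [E, coe_coe, ContinuousLinearMap.comp_apply, hS2']⟩

/-- `E = T⁺ S⁻¹ T` is the unique J-selfadjoint projection onto
`N(T)^[⊥] = R(T⁺)`. -/
theorem jframe_jselfadjoint_projection
    (J : H →L[ℂ] H) (hJ : IsFundSym J) (f : I → H)
    (T : lp (fun _ : I => ℂ) 2 →L[ℂ] H)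
    (hT : ∀ i, T (lp.single 2 i (1:ℂ)) = f i)
    (hTsurj : Function.Surjective T)
    (Pp Pm : lp (fun _ : I => ℂ) 2 →L[ℂ] lp (fun _ : I => ℂ) 2)
    (hPp : ∀ (x : lp (fun _ : I => ℂ) 2) (i : I), Pp x i = if posIdx J f i then x i else 0)
    (hPm : ∀ (x : lp (fun _ : I => ℂ) 2) (i : I), Pm x i = if posIdx J f i then 0 else x i)
    (hJF : MaxUnifJPos J (LinearMap.range ((T.comp Pp : lp (fun _ : I => ℂ) 2 →L[ℂ] H) : lp (fun _ : I => ℂ) 2 →ₗ[ℂ] H)) ∧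
      MaxUnifJNeg J (LinearMap.range ((T.comp Pm : lp (fun _ : I => ℂ) 2 →L[ℂ] H) : lp (fun _ : I => ℂ) 2 →ₗ[ℂ] H)))
    (Tp : H →L[ℂ] lp (fun _ : I => ℂ) 2)
    (hTp : ∀ (x : lp (fun _ : I => ℂ) 2) (y : H), kre J (T x) y = kre (Pp - Pm) x (Tp y))
    (Sinv : H →L[ℂ] H)
    (hS1 : (T.comp Tp).comp Sinv = ContinuousLinearMap.id ℂ H)
    (hS2 : Sinv.comp (T.comp Tp) = ContinuousLinearMap.id ℂ H) :
    (Tp.comp (Sinv.comp T)).comp (Tp.comp (Sinv.comp T)) = Tp.comp (Sinv.comp T) ∧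
      IsJSelfAdj (Pp - Pm) (Tp.comp (Sinv.comp T)) ∧
      LinearMap.range ((Tp.comp (Sinv.comp T) : lp (fun _ : I => ℂ) 2 →L[ℂ] lp (fun _ : I => ℂ) 2) : lp (fun _ : I => ℂ) 2 →ₗ[ℂ] lp (fun _ : I => ℂ) 2) =
        JorthCompanion (Pp - Pm) (LinearMap.ker (T : lp (fun _ : I => ℂ) 2 →ₗ[ℂ] H)) ∧
      LinearMap.range ((Tp.comp (Sinv.comp T) : lp (fun _ : I => ℂ) 2 →L[ℂ] lp (fun _ : I => ℂ) 2) : lp (fun _ : I => ℂ) 2 →ₗ[ℂ] lp (fun _ : I => ℂ) 2) = LinearMap.range (Tp : H →ₗ[ℂ] lp (fun _ : I => ℂ) 2) ∧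
      ∀ E' : lp (fun _ : I => ℂ) 2 →L[ℂ] lp (fun _ : I => ℂ) 2, E'.comp E' = E' → IsJSelfAdj (Pp - Pm) E' →
        LinearMap.range (E' : lp (fun _ : I => ℂ) 2 →ₗ[ℂ] lp (fun _ : I => ℂ) 2) = JorthCompanion (Pp - Pm) (LinearMap.ker (T : lp (fun _ : I => ℂ) 2 →ₗ[ℂ] H)) →
          E' = Tp.comp (Sinv.comp T) :=
  jframe_jselfadjoint_projection_general J hJ f T Pp Pm hPp hPm Tp hTp Sinv hS1 hS2
end
end

section
/- Let F be a J-frame for a Krein space H with synthesis operator T, J-frame operator S = TT⁺, and let Q = P_{M₊ // M₋} be the projection onto M₊ = R(T₊) along M₋ = R(T₋). Then QT = TP₊ and QS = SQ⁺. -/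
/-!
Since `P₊ + P₋ = 1`, `T = TP₊ + TP₋` with `R(TP₊) = R(Q)` and `R(TP₋) = ker Q`, so `QT = TP₊`.
Taking Krein adjoints, with `P₊ - P₋` as the fundamental symmetry of `ℓ²(I)`, gives
`T⁺Q⁺ = P₊T⁺`, because `P₊` is `(P₊ - P₋)`-selfadjoint and adjoints are unique when the Gram
operator is surjective. Hence `QTT⁺ = TP₊T⁺ = TT⁺Q⁺`.
-/

noncomputable section

open scoped Classical

open Function

variable {H : Type*} [NormedAddCommGroup H] [InnerProductSpace ℂ H] [CompleteSpace H]
variable {I : Type*} [DecidableEq I]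

def IsJAdjoint {E F : Type*} [NormedAddCommGroup E] [InnerProductSpace ℂ E]
    [NormedAddCommGroup F] [InnerProductSpace ℂ F]
    (JE : E →L[ℂ] E) (JF : F →L[ℂ] F) (A : E →L[ℂ] F) (B : F →L[ℂ] E) : Prop :=
  ∀ x y, kre JF (A x) y = kre JE x (B y)

section JAdjoint

variable {E F G : Type*} [NormedAddCommGroup E] [InnerProductSpace ℂ E]
  [NormedAddCommGroup F] [InnerProductSpace ℂ F] [NormedAddCommGroup G] [InnerProductSpace ℂ G]
  {JE : E →L[ℂ] E} {JF : F →L[ℂ] F} {JG : G →L[ℂ] G}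

theorem IsJAdjoint.comp {A : E →L[ℂ] F} {A' : F →L[ℂ] E} {B : F →L[ℂ] G} {B' : G →L[ℂ] F}
    (hA : IsJAdjoint JE JF A A') (hB : IsJAdjoint JF JG B B') :
    IsJAdjoint JE JG (B.comp A) (A'.comp B') :=
  fun x y => (hB (A x) y).trans (hA x (B' y))

theorem IsJAdjoint.unique (hJE : Surjective JE) {A : E →L[ℂ] F} {B B' : F →L[ℂ] E}
    (hB : IsJAdjoint JE JF A B) (hB' : IsJAdjoint JE JF A B') : B = B' := by
  ext y
  obtain ⟨x, hx⟩ := hJE (B y - B' y)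
  have hzero : kre JE x (B y - B' y) = 0 := by
    rw [kre, inner_sub_right, ← kre, ← kre, ← hB, ← hB', sub_self]
  rw [kre, hx, inner_self_eq_zero, sub_eq_zero] at hzero
  exact hzero

end JAdjoint

theorem comp_add_eq_of_isIdempotentElem {R E F : Type*} [Semiring R] [AddCommMonoid E]
    [Module R E] [AddCommMonoid F] [Module R F] {Q : F →ₗ[R] F} (hQ : IsIdempotentElem Q)
    {A B : E →ₗ[R] F} (hA : LinearMap.range A ≤ LinearMap.range Q)
    (hB : LinearMap.range B ≤ LinearMap.ker Q) : Q ∘ₗ (A + B) = A := by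
  ext x
  have hQA : Q (A x) = A x := (LinearMap.IsIdempotentElem.mem_range_iff hQ).mp (hA ⟨x, rfl⟩)
  have hQB : Q (B x) = 0 := hB ⟨x, rfl⟩
  simp [hQA, hQB]

section CoordinateProjections

variable {ι : Type*} {p : ι → Prop} {P M : lp (fun _ : ι => ℂ) 2 →L[ℂ] lp (fun _ : ι => ℂ) 2}

theorem add_eq_one_of_apply_eq_ite (hP : ∀ x i, P x i = if p i then x i else 0)
    (hM : ∀ x i, M x i = if p i then 0 else x i) : P + M = 1 := by
  ext x i
  change P x i + M x i = x i
  rw [hP, hM]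
  split_ifs <;> simp

theorem sub_apply_of_apply_eq_ite (hP : ∀ x i, P x i = if p i then x i else 0)
    (hM : ∀ x i, M x i = if p i then 0 else x i) (x : lp (fun _ : ι => ℂ) 2) (i : ι) :
    (P - M) x i = if p i then x i else -x i := by
  change P x i - M x i = _
  rw [hP, hM]
  split_ifs <;> simp

theorem surjective_sub_of_apply_eq_ite (hP : ∀ x i, P x i = if p i then x i else 0)
    (hM : ∀ x i, M x i = if p i then 0 else x i) : Surjective (P - M) := by
  refine fun y => ⟨(P - M) y, lp.ext (funext fun i => ?_)⟩
  rw [sub_apply_of_apply_eq_ite hP hM, sub_apply_of_apply_eq_ite hP hM]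
  split_ifs <;> simp

theorem isJAdjoint_of_apply_eq_ite (hP : ∀ x i, P x i = if p i then x i else 0)
    (hM : ∀ x i, M x i = if p i then 0 else x i) : IsJAdjoint (P - M) (P - M) P P := by
  intro x y
  rw [kre, kre, lp.inner_eq_tsum, lp.inner_eq_tsum]
  refine tsum_congr fun i => ?_
  rw [sub_apply_of_apply_eq_ite hP hM, sub_apply_of_apply_eq_ite hP hM, hP, hP]
  split_ifs <;> simp

end CoordinateProjections

theorem jframe_Q_intertwines_general
    (J : H →L[ℂ] H) (f : I → H)
    (T : lp (fun _ : I => ℂ) 2 →L[ℂ] H)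
    (Pp Pm : lp (fun _ : I => ℂ) 2 →L[ℂ] lp (fun _ : I => ℂ) 2)
    (hPp : ∀ (x : lp (fun _ : I => ℂ) 2) (i : I), Pp x i = if posIdx J f i then x i else 0)
    (hPm : ∀ (x : lp (fun _ : I => ℂ) 2) (i : I), Pm x i = if posIdx J f i then 0 else x i)
    (Tp : H →L[ℂ] lp (fun _ : I => ℂ) 2)
    (hTp : ∀ (x : lp (fun _ : I => ℂ) 2) (y : H), kre J (T x) y = kre (Pp - Pm) x (Tp y))
    (Q : H →L[ℂ] H) (hQidem : Q.comp Q = Q)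
    (hQran : LinearMap.range (Q : H →ₗ[ℂ] H) = LinearMap.range (T.comp Pp : lp (fun _ : I => ℂ) 2 →ₗ[ℂ] H))
    (hQker : LinearMap.ker (Q : H →ₗ[ℂ] H) = LinearMap.range (T.comp Pm : lp (fun _ : I => ℂ) 2 →ₗ[ℂ] H))
    (Qp : H →L[ℂ] H) (hQp : ∀ x y : H, kre J (Q x) y = kre J x (Qp y)) :
    Q.comp T = T.comp Pp ∧ Q.comp (T.comp Tp) = (T.comp Tp).comp Qp := by
  have hQT : Q.comp T = T.comp Pp := by
    have hsplit : T.comp Pp + T.comp Pm = T := by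
      rw [← ContinuousLinearMap.comp_add, add_eq_one_of_apply_eq_ite hPp hPm,
        ContinuousLinearMap.one_def, ContinuousLinearMap.comp_id]
    have hQidem' : IsIdempotentElem (Q : H →ₗ[ℂ] H) :=
      congrArg ((↑) : (H →L[ℂ] H) → H →ₗ[ℂ] H) hQidem
    calc Q.comp T = Q.comp (T.comp Pp + T.comp Pm) := by rw [hsplit]
      _ = T.comp Pp := ContinuousLinearMap.coe_injective
        (comp_add_eq_of_isIdempotentElem hQidem' hQran.ge hQker.ge)
  have hTpQp : Tp.comp Qp = Pp.comp Tp :=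
    (IsJAdjoint.comp hTp hQp).unique (surjective_sub_of_apply_eq_ite hPp hPm)
      (hQT ▸ (isJAdjoint_of_apply_eq_ite hPp hPm).comp hTp)
  refine ⟨hQT, ?_⟩
  rw [← ContinuousLinearMap.comp_assoc, hQT, ContinuousLinearMap.comp_assoc, ← hTpQp,
    ContinuousLinearMap.comp_assoc]

/-- With `Q = P_(M₊ // M₋)` one has `QT = TP₊` and `QS = SQ⁺`. -/
theorem jframe_Q_intertwines
    (J : H →L[ℂ] H) (hJ : IsFundSym J) (f : I → H)
    (T : lp (fun _ : I => ℂ) 2 →L[ℂ] H)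
    (hT : ∀ i, T (lp.single 2 i (1:ℂ)) = f i)
    (hTsurj : Function.Surjective T)
    (Pp Pm : lp (fun _ : I => ℂ) 2 →L[ℂ] lp (fun _ : I => ℂ) 2)
    (hPp : ∀ (x : lp (fun _ : I => ℂ) 2) (i : I), Pp x i = if posIdx J f i then x i else 0)
    (hPm : ∀ (x : lp (fun _ : I => ℂ) 2) (i : I), Pm x i = if posIdx J f i then 0 else x i)
    (hJF : MaxUnifJPos J (LinearMap.range (T.comp Pp : lp (fun _ : I => ℂ) 2 →ₗ[ℂ] H)) ∧
      MaxUnifJNeg J (LinearMap.range (T.comp Pm : lp (fun _ : I => ℂ) 2 →ₗ[ℂ] H)))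
    (Tp : H →L[ℂ] lp (fun _ : I => ℂ) 2)
    (hTp : ∀ (x : lp (fun _ : I => ℂ) 2) (y : H), kre J (T x) y = kre (Pp - Pm) x (Tp y))
    (Q : H →L[ℂ] H) (hQidem : Q.comp Q = Q)
    (hQran : LinearMap.range (Q : H →ₗ[ℂ] H) = LinearMap.range (T.comp Pp : lp (fun _ : I => ℂ) 2 →ₗ[ℂ] H))
    (hQker : LinearMap.ker (Q : H →ₗ[ℂ] H) = LinearMap.range (T.comp Pm : lp (fun _ : I => ℂ) 2 →ₗ[ℂ] H))
    (Qp : H →L[ℂ] H) (hQp : ∀ x y : H, kre J (Q x) y = kre J x (Qp y)) :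
    Q.comp T = T.comp Pp ∧ Q.comp (T.comp Tp) = (T.comp Tp).comp Qp :=
  jframe_Q_intertwines_general J f T Pp Pm hPp hPm Tp hTp Q hQidem hQran hQker Qp hQp
end
end

section
/- Let F be a J-frame for a Krein space H with J-frame operator S and M_± = closed span{f_i : i ∈ I_±}. Then [Sf, f] > 0 for every nonzero f ∈ M₋^{[⊥]}, and [Sf, f] < 0 for every nonzero f ∈ M₊^{[⊥]}. -/
noncomputable section

open scoped Classical

open Function

variable {H : Type*} [NormedAddCommGroup H] [InnerProductSpace ℂ H] [CompleteSpace H]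
variable {I : Type*} [DecidableEq I]

/-! Testing the J-frame identity `[T x, y] = ⟨(P₊ - P₋) x, T⁺ y⟩` on the unit vector `e_i` shows that
the `i`-th coordinate of `T⁺ y` is `σ_i [f_i, y]`. Hence for `y ∈ M₋^[⊥]` the sequence `T⁺ y` is
supported on `I₊`, where `P₊ - P₋` acts as the identity, so `[S y, y] = ‖T⁺ y‖²`; this is positive
because `T⁺` is injective, `T` being surjective and the indefinite inner product nondegenerate.
Symmetrically `[S y, y] = -‖T⁺ y‖²` on `M₊^[⊥]`. -/

section SignedProjection

variable {ι : Type*} {p : ι → Prop} {Pp Pm : lp (fun _ : ι => ℂ) 2 →L[ℂ] lp (fun _ : ι => ℂ) 2}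

theorem signedProj_apply (hPp : ∀ x i, Pp x i = if p i then x i else 0)
    (hPm : ∀ x i, Pm x i = if p i then 0 else x i) (x : lp (fun _ : ι => ℂ) 2) (i : ι) :
    (Pp - Pm) x i = if p i then x i else -x i := by
  rw [sub_apply, lp.coeFn_sub, Pi.sub_apply, hPp, hPm]
  split_ifs <;> simp

theorem signedProj_single [DecidableEq ι] (hPp : ∀ x i, Pp x i = if p i then x i else 0)
    (hPm : ∀ x i, Pm x i = if p i then 0 else x i) (i : ι) :
    (Pp - Pm) (lp.single 2 i 1) = (if p i then 1 else -1 : ℂ) • lp.single 2 i 1 := by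
  ext j
  rw [signedProj_apply hPp hPm, lp.coeFn_smul, Pi.smul_apply, lp.single_apply]
  by_cases hji : j = i
  · subst hji; split_ifs <;> simp
  · simp [hji]

theorem signedProj_eq_self (hPp : ∀ x i, Pp x i = if p i then x i else 0)
    (hPm : ∀ x i, Pm x i = if p i then 0 else x i) {u : lp (fun _ : ι => ℂ) 2}
    (hu : ∀ i, ¬ p i → u i = 0) : (Pp - Pm) u = u := by
  ext i
  rw [signedProj_apply hPp hPm]
  split_ifs with hi
  · rfl
  · simp [hu i hi]

theorem signedProj_eq_neg (hPp : ∀ x i, Pp x i = if p i then x i else 0)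
    (hPm : ∀ x i, Pm x i = if p i then 0 else x i) {u : lp (fun _ : ι => ℂ) 2}
    (hu : ∀ i, p i → u i = 0) : (Pp - Pm) u = -u := by
  ext i
  rw [signedProj_apply hPp hPm, lp.coeFn_neg, Pi.neg_apply]
  split_ifs with hi
  · simp [hu i hi]
  · rfl

end SignedProjection

section Krein

variable {E : Type*} [NormedAddCommGroup E] [InnerProductSpace ℂ E] {J : E →L[ℂ] E}

theorem conj_kre [CompleteSpace E] (hJ : IsSelfAdjoint J) (x y : E) :
    starRingEnd ℂ (kre J x y) = kre J y x :=
  hJ.isSymmetric.conj_inner_sym x y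

theorem eq_zero_of_forall_kre_eq_zero_s6 (hJ : J.comp J = ContinuousLinearMap.id ℂ E) {x : E}
    (hx : ∀ y, kre J y x = 0) : x = 0 := by
  have hJJ : J (J x) = x := congrArg (· x) hJ
  simpa [kre, hJJ] using hx (J x)

theorem mem_negSpan_of_not_posIdx {ι : Type*} {f h : ι → E} {i : ι} (hi : ¬ posIdx J f i) :
    h i ∈ negSpan J f h :=
  Submodule.le_topologicalClosure _ (Submodule.subset_span ⟨i, hi, rfl⟩)

theorem mem_posSpan_of_posIdx {ι : Type*} {f h : ι → E} {i : ι} (hi : posIdx J f i) :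
    h i ∈ posSpan J f h :=
  Submodule.le_topologicalClosure _ (Submodule.subset_span ⟨i, hi, rfl⟩)

end Krein

section JFrame

variable {ι E : Type*} [NormedAddCommGroup E] [InnerProductSpace ℂ E]
  {J : E →L[ℂ] E} {f : ι → E} {T : lp (fun _ : ι => ℂ) 2 →L[ℂ] E}
  {Pp Pm : lp (fun _ : ι => ℂ) 2 →L[ℂ] lp (fun _ : ι => ℂ) 2} {Tp : E →L[ℂ] lp (fun _ : ι => ℂ) 2}

theorem kre_eq_sgnv_mul_apply [DecidableEq ι] (hT : ∀ i, T (lp.single 2 i 1) = f i)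
    (hPp : ∀ x i, Pp x i = if posIdx J f i then x i else 0)
    (hPm : ∀ x i, Pm x i = if posIdx J f i then 0 else x i)
    (hTp : ∀ x y, kre J (T x) y = kre (Pp - Pm) x (Tp y)) (y : E) (i : ι) :
    kre J (f i) y = sgnv J f i * Tp y i := by
  rw [← hT, hTp, kre, signedProj_single hPp hPm, inner_smul_left, lp.inner_single_left]
  unfold sgnv
  split_ifs <;> simp

theorem apply_eq_zero_of_kre_eq_zero [CompleteSpace E] [DecidableEq ι] (hJ : IsSelfAdjoint J)
    (hT : ∀ i, T (lp.single 2 i 1) = f i)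
    (hPp : ∀ x i, Pp x i = if posIdx J f i then x i else 0)
    (hPm : ∀ x i, Pm x i = if posIdx J f i then 0 else x i)
    (hTp : ∀ x y, kre J (T x) y = kre (Pp - Pm) x (Tp y)) {y : E} {i : ι}
    (hy : kre J y (f i) = 0) : Tp y i = 0 := by
  have hσ : sgnv J f i ≠ 0 := by unfold sgnv; split_ifs <;> norm_num
  have h := kre_eq_sgnv_mul_apply hT hPp hPm hTp y i
  rw [← conj_kre hJ, hy, map_zero] at h
  exact (mul_eq_zero.1 h.symm).resolve_left hσ

theorem injective_of_kre_adjoint_of_surjective (hJ : J.comp J = ContinuousLinearMap.id ℂ E)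
    (hTsurj : Function.Surjective T) (hTp : ∀ x y, kre J (T x) y = kre (Pp - Pm) x (Tp y)) :
    Function.Injective Tp := by
  refine (injective_iff_map_eq_zero Tp).2 fun y hy => eq_zero_of_forall_kre_eq_zero_s6 hJ fun z => ?_
  obtain ⟨x, rfl⟩ := hTsurj z
  rw [hTp, hy, kre, inner_zero_right]

end JFrame

theorem jframe_S_definite_on_companions_general
    (J : H →L[ℂ] H) (hJ : IsFundSym J) (f : I → H)
    (T : lp (fun _ : I => ℂ) 2 →L[ℂ] H)
    (hT : ∀ i, T (lp.single 2 i (1:ℂ)) = f i)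
    (hTsurj : Function.Surjective T)
    (Pp Pm : lp (fun _ : I => ℂ) 2 →L[ℂ] lp (fun _ : I => ℂ) 2)
    (hPp : ∀ (x : lp (fun _ : I => ℂ) 2) (i : I), Pp x i = if posIdx J f i then x i else 0)
    (hPm : ∀ (x : lp (fun _ : I => ℂ) 2) (i : I), Pm x i = if posIdx J f i then 0 else x i)
    (Tp : H →L[ℂ] lp (fun _ : I => ℂ) 2)
    (hTp : ∀ (x : lp (fun _ : I => ℂ) 2) (y : H), kre J (T x) y = kre (Pp - Pm) x (Tp y)) :
    (∀ x ∈ JorthCompanion J (negSpan J f f), x ≠ 0 → 0 < (kre J (T (Tp x)) x).re) ∧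
      (∀ x ∈ JorthCompanion J (posSpan J f f), x ≠ 0 → (kre J (T (Tp x)) x).re < 0) := by
  obtain ⟨hJsa, hJ2⟩ := hJ
  have hTp_ne : ∀ x, x ≠ 0 → Tp x ≠ 0 := fun x =>
    (map_ne_zero_iff Tp (injective_of_kre_adjoint_of_surjective hJ2 hTsurj hTp)).2
  have hTp_apply : ∀ x i, kre J x (f i) = 0 → Tp x i = 0 := fun x i =>
    apply_eq_zero_of_kre_eq_zero hJsa hT hPp hPm hTp
  refine ⟨fun x hx hx0 => ?_, fun x hx hx0 => ?_⟩
  · have hsupp : ∀ i, ¬ posIdx J f i → Tp x i = 0 := fun i hi =>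
      hTp_apply x i (hx _ (mem_negSpan_of_not_posIdx hi))
    rw [hTp, kre, signedProj_eq_self hPp hPm hsupp]
    exact (re_inner_self_pos (𝕜 := ℂ)).2 (hTp_ne x hx0)
  · have hsupp : ∀ i, posIdx J f i → Tp x i = 0 := fun i hi =>
      hTp_apply x i (hx _ (mem_posSpan_of_posIdx hi))
    rw [hTp, kre, signedProj_eq_neg hPp hPm hsupp, inner_neg_left, Complex.neg_re, neg_lt_zero]
    exact (re_inner_self_pos (𝕜 := ℂ)).2 (hTp_ne x hx0)

/-- `[Sf,f] > 0` for nonzero `f ∈ M₋^[⊥]` and `[Sf,f] < 0` for nonzero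
`f ∈ M₊^[⊥]`. -/
theorem jframe_S_definite_on_companions
    (J : H →L[ℂ] H) (hJ : IsFundSym J) (f : I → H)
    (T : lp (fun _ : I => ℂ) 2 →L[ℂ] H)
    (hT : ∀ i, T (lp.single 2 i (1:ℂ)) = f i)
    (hTsurj : Function.Surjective T)
    (Pp Pm : lp (fun _ : I => ℂ) 2 →L[ℂ] lp (fun _ : I => ℂ) 2)
    (hPp : ∀ (x : lp (fun _ : I => ℂ) 2) (i : I), Pp x i = if posIdx J f i then x i else 0)
    (hPm : ∀ (x : lp (fun _ : I => ℂ) 2) (i : I), Pm x i = if posIdx J f i then 0 else x i)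
    (hJF : MaxUnifJPos J (LinearMap.range (T.comp Pp : lp (fun _ : I => ℂ) 2 →ₗ[ℂ] H)) ∧
      MaxUnifJNeg J (LinearMap.range (T.comp Pm : lp (fun _ : I => ℂ) 2 →ₗ[ℂ] H)))
    (Tp : H →L[ℂ] lp (fun _ : I => ℂ) 2)
    (hTp : ∀ (x : lp (fun _ : I => ℂ) 2) (y : H), kre J (T x) y = kre (Pp - Pm) x (Tp y)) :
    (∀ x ∈ JorthCompanion J (negSpan J f f), x ≠ 0 → 0 < (kre J (T (Tp x)) x).re) ∧
      (∀ x ∈ JorthCompanion J (posSpan J f f), x ≠ 0 → (kre J (T (Tp x)) x).re < 0) :=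
  jframe_S_definite_on_companions_general J hJ f T hT hTsurj Pp Pm hPp hPm Tp hTp
end
end
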